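/- Quantitative continuity of the update at weakly regular profiles: let f be an (m,M)-weakly regular profile. Then there exists δ₀ with 0 < δ₀ ≤ 1/4 such that, for every δ ≤ δ₀ and every profile g with ‖f − g‖_∞ ≤ δ, one has ‖Uf − Ug‖_∞ ≤ 17·(M/m)·δ. -/

import Mathlib

open MeasureTheory Set

/-- The neighbourhood `N_α(f)` of an agent `α ∈ [0,1]`:
all agents `β ∈ [0,1]` whose opinion is within distance 1 of that of `α`. -/
def nbhdHK (f : ℝ → ℝ) (α : ℝ) : Set ℝ :=
  {β | β ∈ Icc (0:ℝ) 1 ∧ |f β - f α| ≤ 1}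

/-- The Hegselmann–Krause updating operator `U`:
`Uf(α)` is the average of `f` over `N_α(f)` if that set has positive Lebesgue
measure, and `f(α)` otherwise. -/
noncomputable def updateHK (f : ℝ → ℝ) (α : ℝ) : ℝ :=
  if 0 < (volume (nbhdHK f α)).toReal then
    (∫ β in nbhdHK f α, f β) / (volume (nbhdHK f α)).toReal
  else f α

/-- `f` is `(m,M)`-regular on `S`: `m·|α-β| ≤ |f(α)-f(β)| ≤ M·|α-β|` on `S`. -/
def RegularOnHK (m M : ℝ) (f : ℝ → ℝ) (S : Set ℝ) : Prop :=
  ∀ α ∈ S, ∀ β ∈ S, m * |α - β| ≤ |f α - f β| ∧ |f α - f β| ≤ M * |α - β|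

/-- `f` is `(m,M)`-weakly regular: there is a closed (possibly empty)
subinterval `S = [a,b]` of `N₀(f) ∩ N₁(f)` such that `f` is `(m,M)`-regular on
`[0,1] \ S`, `f` is constant on `S`, and, if `D(f) ≤ 2`, neither endpoint of the
interval `N₀(f) ∩ N₁(f)` is an endpoint of `S`. -/
def WeaklyRegularHK (m M : ℝ) (f : ℝ → ℝ) : Prop :=
  ∃ a b : ℝ, Icc a b ⊆ nbhdHK f 0 ∩ nbhdHK f 1 ∧
    RegularOnHK m M f (Icc (0:ℝ) 1 \ Icc a b) ∧
    (∀ x ∈ Icc a b, f x = f a) ∧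
    (f 1 - f 0 ≤ 2 → a ≤ b →
      a ≠ sInf (nbhdHK f 0 ∩ nbhdHK f 1) ∧ a ≠ sSup (nbhdHK f 0 ∩ nbhdHK f 1) ∧
      b ≠ sInf (nbhdHK f 0 ∩ nbhdHK f 1) ∧ b ≠ sSup (nbhdHK f 0 ∩ nbhdHK f 1))

/-!
For a monotone profile `h` the neighbourhood `N_α(h)` is an interval up to its endpoints
`p = inf N_α(h)` and `q = sup N_α(h)`, so `Uh(α)` is the average of `h` over `[p, q]`, on which
`h` varies by at most `2`. Let `|f - g| ≤ δ`. Between the left endpoints of `N_α(f)` and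
`N_α(g)` the profile `f` is confined to a window of width `2δ`, so by the lower regularity bound
these endpoints are `2δ/m` apart; likewise on the right. Shrinking each neighbourhood to the
common part `[u, v]` therefore changes each average by at most `2 · (2δ/m) / (v - u)`, and
replacing `f` by `g` on `[u, v]` costs `δ`. The upper regularity bound puts an interval of length
`1/(2M)` around `α` into both neighbourhoods, which gives `16 (M/m) δ + δ`.

Regularity fails only on the plateau of `f`, whose value is at distance `< 1` from `f 0` and
`f 1` by the endpoint condition of weak regularity. For small `δ`, an agent whose opinion is
within `1 - 2δ` of all others, in particular one on the plateau, has all of `[0,1]` as its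
neighbourhood in both profiles, and then `|Uf(α) - Ug(α)| ≤ δ`.
-/

section IntervalAverage

variable {h : ℝ → ℝ} {a b L U : ℝ}

theorem MonotoneOn.intervalIntegrable_of_mem_Icc {c d : ℝ} (hh : MonotoneOn h (Icc c d))
    (ha : a ∈ Icc c d) (hb : b ∈ Icc c d) : IntervalIntegrable h volume a b :=
  (hh.mono (uIcc_subset_Icc ha hb)).intervalIntegrable

theorem integral_mem_Icc_of_forall_mem_Ioo (hab : a ≤ b) (hi : IntervalIntegrable h volume a b)
    (hLU : ∀ x ∈ Ioo a b, h x ∈ Icc L U) :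
    ∫ x in a..b, h x ∈ Icc ((b - a) * L) ((b - a) * U) := by
  have hL := intervalIntegral.integral_mono_on_of_le_Ioo hab intervalIntegrable_const hi
    fun x hx => (hLU x hx).1
  have hU := intervalIntegral.integral_mono_on_of_le_Ioo hab hi intervalIntegrable_const
    fun x hx => (hLU x hx).2
  simp only [intervalIntegral.integral_const, smul_eq_mul] at hL hU
  exact ⟨hL, hU⟩

theorem intervalAverage_mem_Icc_of_forall_mem_Ioo (hab : a < b)
    (hi : IntervalIntegrable h volume a b) (hLU : ∀ x ∈ Ioo a b, h x ∈ Icc L U) :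
    ⨍ x in a..b, h x ∈ Icc L U := by
  obtain ⟨hL, hU⟩ := integral_mem_Icc_of_forall_mem_Ioo hab.le hi hLU
  have hba : 0 < b - a := sub_pos.2 hab
  rw [interval_average_eq_div]
  exact ⟨(le_div_iff₀ hba).2 (by linarith), (div_le_iff₀ hba).2 (by linarith)⟩

theorem abs_intervalAverage_sub_le {f g : ℝ → ℝ} {δ : ℝ} (hab : a < b)
    (hf : IntervalIntegrable f volume a b) (hg : IntervalIntegrable g volume a b)
    (hfg : ∀ x ∈ Ioo a b, |f x - g x| ≤ δ) :
    |(⨍ x in a..b, f x) - ⨍ x in a..b, g x| ≤ δ := by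
  have := intervalAverage_mem_Icc_of_forall_mem_Ioo hab (hf.sub hg) fun x hx => abs_le.1 (hfg x hx)
  rw [interval_average_eq_div] at this
  rw [interval_average_eq_div, interval_average_eq_div, ← sub_div,
    ← intervalIntegral.integral_sub hf hg]
  exact abs_le.2 this

/- The two end pieces deviate from the inner average in opposite directions (the left one lies
below it, the right one above), so their errors do not add up. -/
theorem abs_intervalAverage_sub_intervalAverage_le_of_monotoneOn {p u v q A B : ℝ}
    (hh : MonotoneOn h (Icc p q)) (hpu : p ≤ u) (huv : u < v) (hvq : v ≤ q)
    (hAB : ∀ x ∈ Ioo p q, h x ∈ Icc A B) :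
    |(⨍ x in p..q, h x) - ⨍ x in u..v, h x| ≤ (B - A) * max (u - p) (q - v) / (q - p) := by
  have hint : ∀ {a b}, a ∈ Icc p q → b ∈ Icc p q → IntervalIntegrable h volume a b :=
    hh.intervalIntegrable_of_mem_Icc
  have hu : u ∈ Icc p q := ⟨hpu, huv.le.trans hvq⟩
  have hv : v ∈ Icc p q := ⟨hpu.trans huv.le, hvq⟩
  have hp : p ∈ Icc p q := left_mem_Icc.2 (hpu.trans hu.2)
  have hq : q ∈ Icc p q := right_mem_Icc.2 (hpu.trans hu.2)
  have hIoo : ∀ x ∈ Ioo u v, x ∈ Icc p q := fun x hx => ⟨hpu.trans hx.1.le, hx.2.le.trans hvq⟩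
  set μ := ⨍ x in u..v, h x with hμ_def
  have hμ : μ ∈ Icc (h u) (h v) := intervalAverage_mem_Icc_of_forall_mem_Ioo huv (hint hu hv)
    fun x hx => ⟨hh hu (hIoo x hx) hx.1.le, hh (hIoo x hx) hv hx.2.le⟩
  have hμAB : μ ∈ Icc A B := intervalAverage_mem_Icc_of_forall_mem_Ioo huv (hint hu hv)
    fun x hx => hAB x ⟨hpu.trans_lt hx.1, hx.2.trans_le hvq⟩
  obtain ⟨hS₁A, hS₁μ⟩ := integral_mem_Icc_of_forall_mem_Ioo hpu (hint hp hu) (L := A) (U := μ)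
    fun x hx => ⟨(hAB x ⟨hx.1, hx.2.trans_le hu.2⟩).1,
      (hh ⟨hx.1.le, hx.2.le.trans hu.2⟩ hu hx.2.le).trans hμ.1⟩
  obtain ⟨hS₃μ, hS₃B⟩ := integral_mem_Icc_of_forall_mem_Ioo hvq (hint hv hq) (L := μ) (U := B)
    fun x hx => ⟨hμ.2.trans (hh hv ⟨hv.1.trans hx.1.le, hx.2.le⟩ hx.1.le),
      (hAB x ⟨hv.1.trans_lt hx.1, hx.2⟩).2⟩
  have hS₂ : ∫ x in u..v, h x = (v - u) * μ := by
    rw [hμ_def, interval_average_eq_div, mul_div_cancel₀ _ (sub_pos.2 huv).ne']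
  have hsplit :
      ∫ x in p..q, h x = (∫ x in p..u, h x) + (∫ x in u..v, h x) + ∫ x in v..q, h x := by
    rw [intervalIntegral.integral_add_adjacent_intervals (hint hp hu) (hint hu hv),
      intervalIntegral.integral_add_adjacent_intervals (hint hp hv) (hint hv hq)]
  have hqp : 0 < q - p := by linarith
  have hnum : |(∫ x in p..q, h x) - (q - p) * μ| ≤ (B - A) * max (u - p) (q - v) := by
    have hleft : (u - p) * (B - A) ≤ max (u - p) (q - v) * (B - A) :=
      mul_le_mul_of_nonneg_right (le_max_left _ _) (by linarith [hμAB.1, hμAB.2])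
    have hright : (q - v) * (B - A) ≤ max (u - p) (q - v) * (B - A) :=
      mul_le_mul_of_nonneg_right (le_max_right _ _) (by linarith [hμAB.1, hμAB.2])
    rw [abs_le]
    constructor <;> nlinarith [hμAB.1, hμAB.2]
  rw [interval_average_eq_div h p q, div_sub' hqp.ne', abs_div, abs_of_pos hqp]
  gcongr

end IntervalAverage

section Neighbourhood

variable {h : ℝ → ℝ} {α z : ℝ}

theorem nbhdHK_subset_Icc : nbhdHK h α ⊆ Icc 0 1 := fun _ hx => hx.1

theorem bddBelow_nbhdHK : BddBelow (nbhdHK h α) := ⟨0, fun _ hx => hx.1.1⟩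

theorem bddAbove_nbhdHK : BddAbove (nbhdHK h α) := ⟨1, fun _ hx => hx.1.2⟩

theorem mem_nbhdHK_self (hα : α ∈ Icc (0:ℝ) 1) : α ∈ nbhdHK h α := ⟨hα, by simp⟩

theorem ordConnected_nbhdHK (hh : MonotoneOn h (Icc 0 1)) : (nbhdHK h α).OrdConnected := by
  refine ⟨fun x hx y hy z hz => ?_⟩
  have hz01 : z ∈ Icc (0:ℝ) 1 := ⟨hx.1.1.trans hz.1, hz.2.trans hy.1.2⟩
  have h₁ := hh hx.1 hz01 hz.1
  have h₂ := hh hz01 hy.1 hz.2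
  exact ⟨hz01, abs_le.2 ⟨by linarith [(abs_le.1 hx.2).1], by linarith [(abs_le.1 hy.2).2]⟩⟩

theorem sInf_nbhdHK_le (hα : α ∈ Icc (0:ℝ) 1) : sInf (nbhdHK h α) ≤ α :=
  csInf_le bddBelow_nbhdHK (mem_nbhdHK_self hα)

theorem le_sSup_nbhdHK (hα : α ∈ Icc (0:ℝ) 1) : α ≤ sSup (nbhdHK h α) :=
  le_csSup bddAbove_nbhdHK (mem_nbhdHK_self hα)

theorem sInf_nbhdHK_nonneg (hα : α ∈ Icc (0:ℝ) 1) : 0 ≤ sInf (nbhdHK h α) :=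
  le_csInf ⟨α, mem_nbhdHK_self hα⟩ fun _ hx => hx.1.1

theorem sSup_nbhdHK_le_one (hα : α ∈ Icc (0:ℝ) 1) : sSup (nbhdHK h α) ≤ 1 :=
  csSup_le ⟨α, mem_nbhdHK_self hα⟩ fun _ hx => hx.1.2

theorem Icc_sInf_sSup_nbhdHK_subset (hα : α ∈ Icc (0:ℝ) 1) :
    Icc (sInf (nbhdHK h α)) (sSup (nbhdHK h α)) ⊆ Icc 0 1 :=
  Icc_subset_Icc (sInf_nbhdHK_nonneg hα) (sSup_nbhdHK_le_one hα)

theorem Ioo_sInf_sSup_nbhdHK_subset (hh : MonotoneOn h (Icc 0 1)) (hα : α ∈ Icc (0:ℝ) 1) :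
    Ioo (sInf (nbhdHK h α)) (sSup (nbhdHK h α)) ⊆ nbhdHK h α :=
  IsConnected.Ioo_csInf_csSup_subset
    ⟨⟨α, mem_nbhdHK_self hα⟩, (ordConnected_nbhdHK hh).isPreconnected⟩
    bddBelow_nbhdHK bddAbove_nbhdHK

theorem mem_nbhdHK_of_sInf_lt (hh : MonotoneOn h (Icc 0 1)) (hα : α ∈ Icc (0:ℝ) 1)
    (hz : sInf (nbhdHK h α) < z) (hzα : z ≤ α) : z ∈ nbhdHK h α := by
  obtain ⟨y, hy, hyz⟩ := exists_lt_of_csInf_lt ⟨α, mem_nbhdHK_self hα⟩ hz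
  exact (ordConnected_nbhdHK hh).out hy (mem_nbhdHK_self hα) ⟨hyz.le, hzα⟩

theorem mem_nbhdHK_of_lt_sSup (hh : MonotoneOn h (Icc 0 1)) (hα : α ∈ Icc (0:ℝ) 1)
    (hz : z < sSup (nbhdHK h α)) (hαz : α ≤ z) : z ∈ nbhdHK h α := by
  obtain ⟨y, hy, hzy⟩ := exists_lt_of_lt_csSup ⟨α, mem_nbhdHK_self hα⟩ hz
  exact (ordConnected_nbhdHK hh).out (mem_nbhdHK_self hα) hy ⟨hαz, hzy.le⟩

theorem mem_nbhdHK_iff_of_le (hh : MonotoneOn h (Icc 0 1)) (hz : z ∈ Icc (0:ℝ) 1)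
    (hα : α ∈ Icc (0:ℝ) 1) (hzα : z ≤ α) : z ∈ nbhdHK h α ↔ h α - 1 ≤ h z := by
  have := hh hz hα hzα
  show z ∈ Icc 0 1 ∧ |h z - h α| ≤ 1 ↔ _
  rw [abs_le]
  exact ⟨fun H => by linarith [H.2.1], fun H => ⟨hz, by linarith, by linarith⟩⟩

theorem mem_nbhdHK_iff_of_ge (hh : MonotoneOn h (Icc 0 1)) (hz : z ∈ Icc (0:ℝ) 1)
    (hα : α ∈ Icc (0:ℝ) 1) (hαz : α ≤ z) : z ∈ nbhdHK h α ↔ h z ≤ h α + 1 := by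
  have := hh hα hz hαz
  show z ∈ Icc 0 1 ∧ |h z - h α| ≤ 1 ↔ _
  rw [abs_le]
  exact ⟨fun H => by linarith [H.2.2], fun H => ⟨hz, by linarith, by linarith⟩⟩

end Neighbourhood

section Update

variable {f g h : ℝ → ℝ} {α δ : ℝ}

theorem updateHK_eq_intervalAverage_of_subset {p q : ℝ} (hpq : p < q)
    (hIoo : Ioo p q ⊆ nbhdHK h α) (hIcc : nbhdHK h α ⊆ Icc p q) :
    updateHK h α = ⨍ x in p..q, h x := by
  have hae : Ioo p q =ᵐ[volume] nbhdHK h α :=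
    ae_eq_of_subset_of_measure_ge hIoo
      ((measure_mono hIcc).trans_eq (by rw [Real.volume_Icc, Real.volume_Ioo]))
      measurableSet_Ioo.nullMeasurableSet
      ((measure_mono hIcc).trans_lt measure_Icc_lt_top).ne
  have hvol : (volume (nbhdHK h α)).toReal = q - p := by
    rw [← measure_congr hae, Real.volume_Ioo, ENNReal.toReal_ofReal (sub_nonneg.2 hpq.le)]
  rw [updateHK, hvol, if_pos (sub_pos.2 hpq), ← setIntegral_congr_set hae,
    interval_average_eq_div, intervalIntegral.integral_of_le hpq.le, integral_Ioc_eq_integral_Ioo]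

theorem updateHK_eq_intervalAverage (hh : MonotoneOn h (Icc 0 1)) (hα : α ∈ Icc (0:ℝ) 1)
    (hpq : sInf (nbhdHK h α) < sSup (nbhdHK h α)) :
    updateHK h α = ⨍ x in sInf (nbhdHK h α)..sSup (nbhdHK h α), h x :=
  updateHK_eq_intervalAverage_of_subset hpq (Ioo_sInf_sSup_nbhdHK_subset hh hα)
    (subset_Icc_csInf_csSup bddBelow_nbhdHK bddAbove_nbhdHK)

theorem abs_updateHK_sub_intervalAverage_le {u v : ℝ} (hh : MonotoneOn h (Icc 0 1))
    (hα : α ∈ Icc (0:ℝ) 1) (hpu : sInf (nbhdHK h α) ≤ u) (huv : u < v)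
    (hvq : v ≤ sSup (nbhdHK h α)) :
    |updateHK h α - ⨍ x in u..v, h x| ≤
      2 * max (u - sInf (nbhdHK h α)) (sSup (nbhdHK h α) - v) /
        (sSup (nbhdHK h α) - sInf (nbhdHK h α)) := by
  have hvals : ∀ x ∈ Ioo (sInf (nbhdHK h α)) (sSup (nbhdHK h α)),
      h x ∈ Icc (h α - 1) (h α + 1) := fun x hx => by
    have := abs_le.1 (Ioo_sInf_sSup_nbhdHK_subset hh hα hx).2
    exact ⟨by linarith, by linarith⟩
  rw [updateHK_eq_intervalAverage hh hα (by linarith)]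
  convert abs_intervalAverage_sub_intervalAverage_le_of_monotoneOn
    (hh.mono (Icc_sInf_sSup_nbhdHK_subset hα)) hpu huv hvq hvals using 2
  ring

theorem mem_nbhdHK_inter_of_abs_sub_le {x : ℝ} (hx : x ∈ Icc (0:ℝ) 1)
    (hα : α ∈ Icc (0:ℝ) 1)
    (hfg : ∀ x ∈ Icc (0:ℝ) 1, |f x - g x| ≤ δ) (hfx : |f x - f α| ≤ 1 - 2 * δ) :
    x ∈ nbhdHK f α ∩ nbhdHK g α := by
  have hx' := abs_le.1 (hfg x hx)
  have hα' := abs_le.1 (hfg α hα)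
  have hfx' := abs_le.1 hfx
  exact ⟨⟨hx, abs_le.2 ⟨by linarith, by linarith⟩⟩,
    ⟨hx, abs_le.2 ⟨by linarith, by linarith⟩⟩⟩

theorem abs_updateHK_sub_le_of_forall_abs_sub_le (hf : MonotoneOn f (Icc 0 1))
    (hg : MonotoneOn g (Icc 0 1)) (hα : α ∈ Icc (0:ℝ) 1)
    (hfg : ∀ x ∈ Icc (0:ℝ) 1, |f x - g x| ≤ δ)
    (hcentral : ∀ x ∈ Icc (0:ℝ) 1, |f x - f α| ≤ 1 - 2 * δ) :
    |updateHK f α - updateHK g α| ≤ δ := by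
  have hsub : Icc 0 1 ⊆ nbhdHK f α ∩ nbhdHK g α :=
    fun x hx => mem_nbhdHK_inter_of_abs_sub_le hx hα hfg (hcentral x hx)
  rw [updateHK_eq_intervalAverage_of_subset zero_lt_one
      (Ioo_subset_Icc_self.trans (hsub.trans inter_subset_left)) nbhdHK_subset_Icc,
    updateHK_eq_intervalAverage_of_subset zero_lt_one
      (Ioo_subset_Icc_self.trans (hsub.trans inter_subset_right)) nbhdHK_subset_Icc]
  have h0 : (0:ℝ) ∈ Icc 0 1 := left_mem_Icc.2 zero_le_one
  have h1 : (1:ℝ) ∈ Icc 0 1 := right_mem_Icc.2 zero_le_one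
  exact abs_intervalAverage_sub_le zero_lt_one (hf.intervalIntegrable_of_mem_Icc h0 h1)
    (hg.intervalIntegrable_of_mem_Icc h0 h1) fun x hx => hfg x (Ioo_subset_Icc_self hx)

theorem abs_updateHK_sub_le_of_Icc_subset {c d w : ℝ} (hf : MonotoneOn f (Icc 0 1))
    (hg : MonotoneOn g (Icc 0 1)) (hα : α ∈ Icc (0:ℝ) 1)
    (hfg : ∀ x ∈ Icc (0:ℝ) 1, |f x - g x| ≤ δ) (hcd : c < d)
    (hsub : Icc c d ⊆ nbhdHK f α ∩ nbhdHK g α)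
    (hp : |sInf (nbhdHK f α) - sInf (nbhdHK g α)| ≤ w)
    (hq : |sSup (nbhdHK f α) - sSup (nbhdHK g α)| ≤ w) :
    |updateHK f α - updateHK g α| ≤ 4 * w / (d - c) + δ := by
  set p := sInf (nbhdHK f α)
  set q := sSup (nbhdHK f α)
  set p' := sInf (nbhdHK g α)
  set q' := sSup (nbhdHK g α)
  set u := max p p'
  set v := min q q'
  have hc := hsub (left_mem_Icc.2 hcd.le)
  have hd := hsub (right_mem_Icc.2 hcd.le)
  have hcu : u ≤ c := max_le (csInf_le bddBelow_nbhdHK hc.1) (csInf_le bddBelow_nbhdHK hc.2)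
  have hdv : d ≤ v := le_min (le_csSup bddAbove_nbhdHK hd.1) (le_csSup bddAbove_nbhdHK hd.2)
  have huv : u < v := by linarith
  have hp_le : u - min p p' = |p - p'| := max_sub_min_eq_abs' p p'
  have hq_le : max q q' - v = |q - q'| := max_sub_min_eq_abs' q q'
  have hend : ∀ {a b : ℝ}, a ≤ u → v ≤ b → u - a ≤ w → b - v ≤ w →
      2 * max (u - a) (b - v) / (b - a) ≤ 2 * w / (d - c) := fun ha hb hwa hwb =>
    div_le_div₀ (by linarith [abs_nonneg (p - p')]) (by linarith [max_le hwa hwb])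
      (by linarith) (by linarith)
  have hUf := (abs_updateHK_sub_intervalAverage_le hf hα (le_max_left p p') huv
    (min_le_left q q')).trans (hend (le_max_left _ _) (min_le_left _ _)
      (by linarith [min_le_left p p']) (by linarith [le_max_left q q']))
  have hUg := (abs_updateHK_sub_intervalAverage_le hg hα (le_max_right p p') huv
    (min_le_right q q')).trans (hend (le_max_right _ _) (min_le_right _ _)
      (by linarith [min_le_right p p']) (by linarith [le_max_right q q']))
  have huv01 : Icc u v ⊆ Icc 0 1 :=
    (Icc_subset_Icc (le_max_left _ _) (min_le_left _ _)).trans (Icc_sInf_sSup_nbhdHK_subset hα)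
  have hu := huv01 (left_mem_Icc.2 huv.le)
  have hv := huv01 (right_mem_Icc.2 huv.le)
  have hmid := abs_intervalAverage_sub_le huv (hf.intervalIntegrable_of_mem_Icc hu hv)
    (hg.intervalIntegrable_of_mem_Icc hu hv) fun x hx => hfg x (huv01 (Ioo_subset_Icc_self hx))
  have h₁ := abs_sub_le (updateHK f α) (⨍ x in u..v, f x) (updateHK g α)
  have h₂ := abs_sub_le (⨍ x in u..v, f x) (⨍ x in u..v, g x) (updateHK g α)
  rw [abs_sub_comm (⨍ x in u..v, g x)] at h₂
  have h4 : 4 * w / (d - c) = 2 * w / (d - c) + 2 * w / (d - c) := by ring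
  linarith

end Update

namespace RegularOnHK

variable {m M : ℝ} {f : ℝ → ℝ} {S : Set ℝ}

theorem le_of_ne (hreg : RegularOnHK m M f S) {x y : ℝ} (hx : x ∈ S) (hy : y ∈ S)
    (hxy : x ≠ y) : m ≤ M :=
  le_of_mul_le_mul_right ((hreg x hx y hy).1.trans (hreg x hx y hy).2)
    (abs_pos.2 (sub_ne_zero.2 hxy))

theorem eq_of_apply_eq (hm : 0 < m) (hreg : RegularOnHK m M f S) {x y : ℝ} (hx : x ∈ S)
    (hy : y ∈ S) (hxy : f x = f y) : x = y := by
  have := (hreg x hx y hy).1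
  rw [hxy, sub_self, abs_zero] at this
  exact sub_eq_zero.1 (abs_nonpos_iff.1 (nonpos_of_mul_nonpos_right this hm))

theorem sub_le_div_of_forall_mem_Ioo (hm : 0 < m) (hreg : RegularOnHK m M f S) {c d L K : ℝ}
    (hK : 0 ≤ K) (hcd : ∀ z ∈ Ioo c d, z ∈ S ∧ f z ∈ Icc L (L + K)) :
    d - c ≤ K / m := by
  rcases le_or_gt d c with hdc | hcd'
  · linarith [div_nonneg hK hm.le]
  rw [← Real.diam_Ioo hcd'.le]
  refine Metric.diam_le_of_forall_dist_le (div_nonneg hK hm.le) fun x hx y hy => ?_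
  obtain ⟨hxS, hxL, hxK⟩ := hcd x hx
  obtain ⟨hyS, hyL, hyK⟩ := hcd y hy
  rw [Real.dist_eq, le_div_iff₀ hm, mul_comm]
  exact (hreg x hxS y hyS).1.trans (abs_sub_le_iff.2 ⟨by linarith, by linarith⟩)

end RegularOnHK

section Perturbation

variable {m M δ α : ℝ} {f g : ℝ → ℝ} {P : Set ℝ}

/- A point strictly between the two infima lies in exactly one of the two neighbourhoods, which
confines `f` there to `[g α - 1 - δ, g α - 1 + δ)`; in particular it is off the plateau `P`. -/
theorem abs_sInf_nbhdHK_sub_le (hm : 0 < m) (hf : MonotoneOn f (Icc 0 1))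
    (hg : MonotoneOn g (Icc 0 1)) (hreg : RegularOnHK m M f (Icc 0 1 \ P))
    (hP : ∀ x ∈ P, ∀ γ ∈ Icc (0:ℝ) 1, |f x - f γ| ≤ 1 - 2 * δ)
    (hfg : ∀ x ∈ Icc (0:ℝ) 1, |f x - g x| ≤ δ) (hα : α ∈ Icc (0:ℝ) 1) :
    |sInf (nbhdHK f α) - sInf (nbhdHK g α)| ≤ 2 * δ / m := by
  have hα' := abs_le.1 (hfg α hα)
  rw [← max_sub_min_eq_abs']
  refine hreg.sub_le_div_of_forall_mem_Ioo hm (by linarith) (L := g α - 1 - δ) fun z hz => ?_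
  have hzα : z < α := hz.2.trans_le (max_le (sInf_nbhdHK_le hα) (sInf_nbhdHK_le hα))
  have hz01 : z ∈ Icc (0:ℝ) 1 :=
    ⟨(le_min (sInf_nbhdHK_nonneg hα) (sInf_nbhdHK_nonneg hα)).trans hz.1.le,
      hzα.le.trans hα.2⟩
  have key :
      (z ∈ nbhdHK f α ∧ z ∉ nbhdHK g α) ∨ (z ∈ nbhdHK g α ∧ z ∉ nbhdHK f α) := by
    rcases le_total (sInf (nbhdHK f α)) (sInf (nbhdHK g α)) with h | h
    · rw [min_eq_left h, max_eq_right h] at hz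
      exact .inl ⟨mem_nbhdHK_of_sInf_lt hf hα hz.1 hzα.le,
        notMem_of_lt_csInf hz.2 bddBelow_nbhdHK⟩
    · rw [min_eq_right h, max_eq_left h] at hz
      exact .inr ⟨mem_nbhdHK_of_sInf_lt hg hα hz.1 hzα.le,
        notMem_of_lt_csInf hz.2 bddBelow_nbhdHK⟩
  rw [mem_nbhdHK_iff_of_le hf hz01 hα hzα.le, mem_nbhdHK_iff_of_le hg hz01 hα hzα.le] at key
  have hz' := abs_le.1 (hfg z hz01)
  have hzf : f z < g α - 1 + δ := by rcases key with k | k <;> linarith [k.1, not_le.1 k.2]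
  refine ⟨⟨hz01, fun hzP => ?_⟩, ?_, by linarith⟩
  · linarith [(abs_le.1 (hP z hzP α hα)).1]
  · rcases key with k | k <;> linarith [k.1, not_le.1 k.2]

theorem abs_sSup_nbhdHK_sub_le (hm : 0 < m) (hf : MonotoneOn f (Icc 0 1))
    (hg : MonotoneOn g (Icc 0 1)) (hreg : RegularOnHK m M f (Icc 0 1 \ P))
    (hP : ∀ x ∈ P, ∀ γ ∈ Icc (0:ℝ) 1, |f x - f γ| ≤ 1 - 2 * δ)
    (hfg : ∀ x ∈ Icc (0:ℝ) 1, |f x - g x| ≤ δ) (hα : α ∈ Icc (0:ℝ) 1) :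
    |sSup (nbhdHK f α) - sSup (nbhdHK g α)| ≤ 2 * δ / m := by
  have hα' := abs_le.1 (hfg α hα)
  rw [← max_sub_min_eq_abs']
  refine hreg.sub_le_div_of_forall_mem_Ioo hm (by linarith) (L := g α + 1 - δ) fun z hz => ?_
  have hαz : α < z := (le_min (le_sSup_nbhdHK hα) (le_sSup_nbhdHK hα)).trans_lt hz.1
  have hz01 : z ∈ Icc (0:ℝ) 1 :=
    ⟨hα.1.trans hαz.le,
      hz.2.le.trans (max_le (sSup_nbhdHK_le_one hα) (sSup_nbhdHK_le_one hα))⟩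
  have key :
      (z ∈ nbhdHK g α ∧ z ∉ nbhdHK f α) ∨ (z ∈ nbhdHK f α ∧ z ∉ nbhdHK g α) := by
    rcases le_total (sSup (nbhdHK f α)) (sSup (nbhdHK g α)) with h | h
    · rw [min_eq_left h, max_eq_right h] at hz
      exact .inl ⟨mem_nbhdHK_of_lt_sSup hg hα hz.2 hαz.le,
        notMem_of_csSup_lt hz.1 bddAbove_nbhdHK⟩
    · rw [min_eq_right h, max_eq_left h] at hz
      exact .inr ⟨mem_nbhdHK_of_lt_sSup hf hα hz.2 hαz.le,
        notMem_of_csSup_lt hz.1 bddAbove_nbhdHK⟩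
  rw [mem_nbhdHK_iff_of_ge hf hz01 hα hαz.le, mem_nbhdHK_iff_of_ge hg hz01 hα hαz.le] at key
  have hz' := abs_le.1 (hfg z hz01)
  have hzf : g α + 1 - δ < f z := by rcases key with k | k <;> linarith [k.1, not_le.1 k.2]
  refine ⟨⟨hz01, fun hzP => ?_⟩, by linarith, ?_⟩
  · linarith [(abs_le.1 (hP z hzP α hα)).2]
  · rcases key with k | k <;> linarith [k.1, not_le.1 k.2]

theorem Icc_subset_nbhdHK_inter (hM : 0 < M) (hreg : RegularOnHK m M f (Icc 0 1 \ P))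
    (hP : ∀ x ∈ P, ∀ γ ∈ Icc (0:ℝ) 1, |f x - f γ| ≤ 1 - 2 * δ) (hδ : δ ≤ 1 / 4)
    (hfg : ∀ x ∈ Icc (0:ℝ) 1, |f x - g x| ≤ δ) (hα : α ∈ Icc (0:ℝ) 1)
    (hαP : α ∉ P) :
    Icc (max (α - 1 / (2 * M)) 0) (min (α + 1 / (2 * M)) 1) ⊆ nbhdHK f α ∩ nbhdHK g α := by
  intro x hx
  have hx01 : x ∈ Icc (0:ℝ) 1 :=
    ⟨(le_max_right _ _).trans hx.1, hx.2.trans (min_le_right _ _)⟩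
  refine mem_nbhdHK_inter_of_abs_sub_le hx01 hα hfg ?_
  by_cases hxP : x ∈ P
  · exact hP x hxP α hα
  have hxα : |x - α| ≤ 1 / (2 * M) :=
    abs_le.2 ⟨by linarith [(le_max_left _ _).trans hx.1],
      by linarith [hx.2.trans (min_le_left _ _)]⟩
  calc |f x - f α| ≤ M * |x - α| := (hreg x ⟨hx01, hxP⟩ α ⟨hα, hαP⟩).2
    _ ≤ M * (1 / (2 * M)) := by gcongr
    _ = 1 / 2 := by field_simp
    _ ≤ 1 - 2 * δ := by linarith

theorem abs_updateHK_sub_le_of_regularOn_diff (hm : 0 < m) (hmM : m ≤ M)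
    (hf : MonotoneOn f (Icc 0 1)) (hg : MonotoneOn g (Icc 0 1))
    (hreg : RegularOnHK m M f (Icc 0 1 \ P))
    (hP : ∀ x ∈ P, ∀ γ ∈ Icc (0:ℝ) 1, |f x - f γ| ≤ 1 - 2 * δ) (hδ : δ ≤ 1 / 4)
    (hfg : ∀ x ∈ Icc (0:ℝ) 1, |f x - g x| ≤ δ) (hα : α ∈ Icc (0:ℝ) 1) :
    |updateHK f α - updateHK g α| ≤ 17 * (M / m) * δ := by
  have hδ0 : 0 ≤ δ := (abs_nonneg _).trans (hfg α hα)
  have hMm : 1 ≤ M / m := (one_le_div hm).2 hmM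
  by_cases hcentral : ∀ x ∈ Icc (0:ℝ) 1, |f x - f α| ≤ 1 - 2 * δ
  · calc |updateHK f α - updateHK g α| ≤ δ :=
          abs_updateHK_sub_le_of_forall_abs_sub_le hf hg hα hfg hcentral
      _ ≤ 17 * (M / m) * δ := by nlinarith
  push Not at hcentral
  obtain ⟨x, hx, hfx⟩ := hcentral
  have hxP : x ∉ P := fun h => (hP x h α hα).not_gt hfx
  have hαP : α ∉ P := fun h => (abs_sub_comm (f x) (f α) ▸ hP α h x hx).not_gt hfx
  have hM : 1 / 2 < M := calc
    1 / 2 ≤ 1 - 2 * δ := by linarith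
    _ < |f x - f α| := hfx
    _ ≤ M * |x - α| := (hreg x ⟨hx, hxP⟩ α ⟨hα, hαP⟩).2
    _ ≤ M * 1 := by
      gcongr
      · linarith
      · exact abs_sub_le_iff.2 ⟨by linarith [hx.2, hα.1], by linarith [hx.1, hα.2]⟩
    _ = M := mul_one M
  set r := 1 / (2 * M) with hr
  have hr0 : 0 < r := by positivity
  have hr1 : r ≤ 1 := (div_le_one (by linarith)).2 (by linarith)
  have hlen : r ≤ min (α + r) 1 - max (α - r) 0 := by
    rcases min_cases (α + r) 1 with h | h <;> rcases max_cases (α - r) 0 with h' | h' <;>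
      linarith [hα.1, hα.2]
  calc |updateHK f α - updateHK g α|
      ≤ 4 * (2 * δ / m) / (min (α + r) 1 - max (α - r) 0) + δ :=
        abs_updateHK_sub_le_of_Icc_subset hf hg hα hfg (by linarith)
          (Icc_subset_nbhdHK_inter (by linarith) hreg hP hδ hfg hα hαP)
          (abs_sInf_nbhdHK_sub_le hm hf hg hreg hP hfg hα)
          (abs_sSup_nbhdHK_sub_le hm hf hg hreg hP hfg hα)
    _ ≤ 4 * (2 * δ / m) / r + δ := by gcongr
    _ = 16 * (M / m) * δ + δ := by rw [hr]; field_simp; ring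
    _ ≤ 17 * (M / m) * δ := by nlinarith

end Perturbation

section Plateau

variable {m M a b : ℝ} {f : ℝ → ℝ}

theorem mem_Icc_of_apply_eq_of_regularOn_diff (hm : 0 < m) (hmono : MonotoneOn f (Icc 0 1))
    (hreg : RegularOnHK m M f (Icc 0 1 \ Icc a b)) (hconst : ∀ x ∈ Icc a b, f x = f a)
    (ha : a ∈ Icc (0:ℝ) 1) (hb : b ∈ Icc (0:ℝ) 1) (hab : a ≤ b) {β : ℝ}
    (hβ : β ∈ Icc (0:ℝ) 1) (hfβ : f β = f a) : β ∈ Icc a b := by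
  by_contra hβab
  have hβS : β ∈ Icc 0 1 \ Icc a b := ⟨hβ, hβab⟩
  rcases lt_or_ge β a with hβa | haβ
  · have hzS : (β + a) / 2 ∈ Icc 0 1 \ Icc a b :=
      ⟨⟨by linarith [hβ.1], by linarith [ha.2]⟩, fun h => by linarith [h.1]⟩
    have hz : f ((β + a) / 2) = f β :=
      le_antisymm (hfβ ▸ hmono hzS.1 ha (by linarith)) (hmono hβ hzS.1 (by linarith))
    linarith [hreg.eq_of_apply_eq hm hzS hβS hz]
  · have hbβ : b < β := lt_of_not_ge fun h => hβab ⟨haβ, h⟩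
    have hzS : (b + β) / 2 ∈ Icc 0 1 \ Icc a b :=
      ⟨⟨by linarith [hb.1], by linarith [hβ.2]⟩, fun h => by linarith [h.2]⟩
    have hz : f ((b + β) / 2) = f β := le_antisymm (hmono hzS.1 hβ (by linarith))
      (hfβ ▸ hconst b ⟨hab, le_rfl⟩ ▸ hmono hb hzS.1 (by linarith))
    linarith [hreg.eq_of_apply_eq hm hzS hβS hz]

theorem WeaklyRegularHK.exists_central_plateau (hm : 0 < m) (hmono : MonotoneOn f (Icc 0 1))
    (hwr : WeaklyRegularHK m M f) :
    ∃ P : Set ℝ, RegularOnHK m M f (Icc 0 1 \ P) ∧ (0:ℝ) ∉ P ∧ (1:ℝ) ∉ P ∧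
      ∃ ε > 0, ∀ x ∈ P, ∀ γ ∈ Icc (0:ℝ) 1, |f x - f γ| ≤ 1 - ε := by
  obtain ⟨a, b, hsub, hreg, hconst, hend⟩ := hwr
  refine ⟨Icc a b, hreg, ?_⟩
  rcases lt_or_ge b a with hba | hab
  · simp only [Icc_eq_empty_of_lt hba, notMem_empty, not_false_eq_true, true_and]
    exact ⟨1, one_pos, fun _ h => h.elim⟩
  set N := nbhdHK f 0 ∩ nbhdHK f 1
  have haN : a ∈ N := hsub (left_mem_Icc.2 hab)
  have hbN : b ∈ N := hsub (right_mem_Icc.2 hab)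
  have hfa0 := abs_le.1 haN.1.2
  have hfa1 := abs_le.1 haN.2.2
  have hfb : f b = f a := hconst b (right_mem_Icc.2 hab)
  obtain ⟨haInf, -, -, hbSup⟩ := hend (by linarith) hab
  have h0 : (0:ℝ) ∉ Icc a b := fun h =>
    haInf (IsLeast.csInf_eq ⟨haN, fun β hβ => h.1.trans hβ.1.1.1⟩).symm
  have h1 : (1:ℝ) ∉ Icc a b := fun h =>
    hbSup (IsGreatest.csSup_eq ⟨hbN, fun β hβ => hβ.1.1.2.trans h.2⟩).symm
  have hplateau {β : ℝ} (hβ : β ∈ Icc (0:ℝ) 1) : f β = f a → β ∈ Icc a b :=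
    mem_Icc_of_apply_eq_of_regularOn_diff hm hmono hreg hconst haN.1.1 hbN.1.1 hab hβ
  -- Otherwise `b` would be the largest point of `N₀(f) ∩ N₁(f)`; symmetrically for `hright`.
  have hleft : f a - f 0 < 1 := by
    by_contra H
    refine hbSup (IsGreatest.csSup_eq ⟨hbN, fun β hβ => le_of_not_gt fun hbβ => ?_⟩).symm
    have hfβ : f β = f a := le_antisymm (by linarith [(abs_le.1 hβ.1.2).2])
      (hfb ▸ hmono hbN.1.1 hβ.1.1 hbβ.le)
    exact (hplateau hβ.1.1 hfβ).2.not_gt hbβ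
  have hright : f 1 - f a < 1 := by
    by_contra H
    refine haInf (IsLeast.csInf_eq ⟨haN, fun β hβ => le_of_not_gt fun hβa => ?_⟩).symm
    have hfβ : f β = f a := le_antisymm (hmono hβ.1.1 haN.1.1 hβa.le)
      (by linarith [(abs_le.1 hβ.2.2).1])
    exact (hplateau hβ.1.1 hfβ).1.not_gt hβa
  refine ⟨h0, h1, min (1 - (f a - f 0)) (1 - (f 1 - f a)), lt_min (by linarith) (by linarith),
    fun x hx γ hγ => ?_⟩
  have hγ0 := hmono (left_mem_Icc.2 zero_le_one) hγ hγ.1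
  have hγ1 := hmono hγ (right_mem_Icc.2 zero_le_one) hγ.2
  rw [hconst x hx]
  exact abs_le.2 ⟨by linarith [min_le_right (1 - (f a - f 0)) (1 - (f 1 - f a))],
    by linarith [min_le_left (1 - (f a - f 0)) (1 - (f 1 - f a))]⟩

end Plateau

theorem stmt8_general (m M : ℝ) (hm : 0 < m) (f : ℝ → ℝ)
    (hmono : MonotoneOn f (Icc 0 1)) (hwr : WeaklyRegularHK m M f) :
    ∃ δ₀ : ℝ, 0 < δ₀ ∧ δ₀ ≤ 1 / 4 ∧
      ∀ δ : ℝ, δ ≤ δ₀ → ∀ g : ℝ → ℝ, MonotoneOn g (Icc 0 1) →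
        (∀ α ∈ Icc (0:ℝ) 1, |f α - g α| ≤ δ) →
        ∀ α ∈ Icc (0:ℝ) 1, |updateHK f α - updateHK g α| ≤ 17 * (M / m) * δ := by
  obtain ⟨P, hreg, h0, h1, ε, hε, hP⟩ := hwr.exists_central_plateau hm hmono
  have hmM : m ≤ M := hreg.le_of_ne ⟨left_mem_Icc.2 zero_le_one, h0⟩
    ⟨right_mem_Icc.2 zero_le_one, h1⟩ zero_ne_one
  refine ⟨min (1 / 4) (ε / 2), by positivity, min_le_left _ _,
    fun δ hδ g hg hfg α hα => ?_⟩
  have hδε : 2 * δ ≤ ε := by linarith [hδ.trans (min_le_right _ _)]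
  exact abs_updateHK_sub_le_of_regularOn_diff hm hmM hmono hg hreg
    (fun x hx γ hγ => (hP x hx γ hγ).trans (by linarith)) (hδ.trans (min_le_left _ _)) hfg hα

/-- quantitative continuity of the update at weakly regular
profiles: there is `0 < δ₀ ≤ 1/4` such that for all `δ ≤ δ₀` and all profiles `g`
with `‖f - g‖_∞ ≤ δ`, one has `‖Uf - Ug‖_∞ ≤ 17·(M/m)·δ`. -/
theorem stmt8 (m M : ℝ) (hm : 0 < m) (hM : 0 < M) (f : ℝ → ℝ)
    (hmono : MonotoneOn f (Icc 0 1)) (hwr : WeaklyRegularHK m M f) :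
    ∃ δ₀ : ℝ, 0 < δ₀ ∧ δ₀ ≤ 1 / 4 ∧
      ∀ δ : ℝ, δ ≤ δ₀ → ∀ g : ℝ → ℝ, MonotoneOn g (Icc 0 1) →
        (∀ α ∈ Icc (0:ℝ) 1, |f α - g α| ≤ δ) →
        ∀ α ∈ Icc (0:ℝ) 1, |updateHK f α - updateHK g α| ≤ 17 * (M / m) * δ :=
  stmt8_general m M hm f hmono hwr
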